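/- arXiv:0801.1942 — 6 statements merged into one kernel-verified Lean document; each statement's English description precedes it below -/
import Mathlib

section
/- Let p be a prime. If G is a p-group, N is a normal subgroup of G contained in the commutator subgroup D(G), and the center Z(N) of N is cyclic, then N is cyclic; consequently, if N is a normal subgroup of a p-group G with N ⊆ D(G) and |N| = p^3, then N is abelian. -/
open Subgroup
open scoped commutatorElement



lemma aux_meets_center {p : ℕ} [Fact p.Prime] {G : Type*} [Group G] [Finite G]
    (hG : IsPGroup p G) {K : Subgroup G} (hK : K.Normal) (hKbot : K ≠ ⊥) :
    ∃ x : G, x ∈ K ∧ x ∈ Subgroup.center G ∧ x ≠ 1 := by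
  have hKp : IsPGroup p K := hG.to_subgroup K
  haveI : Nontrivial ↥K := (Subgroup.nontrivial_iff_ne_bot K).mpr hKbot
  have hdvd : p ∣ Nat.card K := by
    obtain ⟨n, hn0, hn⟩ := hKp.nontrivial_iff_card.mp inferInstance
    exact hn ▸ dvd_pow_self p hn0.ne'
  have hConj : IsPGroup p (ConjAct G) := hG.of_equiv ConjAct.toConjAct
  have h1 : (1 : K) ∈ MulAction.fixedPoints (ConjAct G) K := by
    intro g; exact smul_one g
  obtain ⟨b, hb, hb1⟩ := hConj.exists_fixed_point_of_prime_dvd_card_of_fixed_point ↥K hdvd h1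
  refine ⟨b, b.2, ?_, fun h => hb1 (by ext; simp [h])⟩
  rw [Subgroup.mem_center_iff]
  intro g
  have h2 := congrArg Subtype.val (hb (ConjAct.toConjAct g))
  rw [ConjAct.Subgroup.val_conj_smul, ConjAct.toConjAct_smul] at h2
  calc g * ↑b = (g * ↑b * g⁻¹) * g := by group
    _ = ↑b * g := by rw [h2]



lemma aux_mulaut_comm {H : Type*} [Group H] [IsCyclic H] (σ τ : MulAut H) : σ * τ = τ * σ := by
  obtain ⟨g, hg⟩ := IsCyclic.exists_generator (α := H)
  ext x
  obtain ⟨i, rfl⟩ := hg x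
  obtain ⟨m, hm⟩ := hg (σ g)
  obtain ⟨k, hk⟩ := hg (τ g)
  simp only [MulAut.mul_apply]
  have h1 : σ (τ (g ^ i)) = g ^ (m * (k * i)) := by
    rw [map_zpow, ← hk, ← zpow_mul, map_zpow, ← hm, ← zpow_mul]
  have h2 : τ (σ (g ^ i)) = g ^ (k * (m * i)) := by
    rw [map_zpow, ← hm, ← zpow_mul, map_zpow, ← hk, ← zpow_mul]
  rw [h1, h2]
  congr 1
  ring

lemma aux_commutator_centralizes {G : Type*} [Group G] {A : Subgroup G} (hA : A.Normal)
    (hcomm : ∀ σ τ : MulAut ↥A, σ * τ = τ * σ) :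
    commutator G ≤ Subgroup.centralizer (A : Set G) := by
  rw [commutator_def, Subgroup.commutator_le]
  intro g _ h _
  rw [Subgroup.mem_centralizer_iff]
  intro a ha
  have key : MulAut.conjNormal (G := G) (H := A) ⁅g, h⁆ = 1 := by
    rw [commutatorElement_def]
    simp only [map_mul, map_inv]
    rw [hcomm (MulAut.conjNormal g) (MulAut.conjNormal h)]
    group
  have h2 : ⁅g, h⁆ * a * ⁅g, h⁆⁻¹ = a := by
    have := congrArg (fun σ : MulAut ↥A => (σ (⟨a, ha⟩ : ↥A) : G)) key
    simpa [-map_commutatorElement] using this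
  calc a * ⁅g, h⁆ = (⁅g, h⁆ * a * ⁅g, h⁆⁻¹) * ⁅g, h⁆ := by rw [h2]
    _ = ⁅g, h⁆ * a := by group



/-- If every element of `E` commutes with every element of `N`, `E ≤ N`, and the center
of `N` is cyclic, then `E` is cyclic. -/
lemma aux_central_cyclic {G : Type*} [Group G] {N E : Subgroup G}
    (hZN : IsCyclic (Subgroup.center ↥N)) (hEN : E ≤ N)
    (hcen : ∀ e ∈ E, ∀ n ∈ N, n * e = e * n) : IsCyclic ↥E := by
  have hle : E.subgroupOf N ≤ Subgroup.center ↥N := by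
    intro x hx
    rw [Subgroup.mem_center_iff]
    intro m
    exact Subtype.ext (hcen x.1 hx m.1 m.2)
  haveI := hZN
  haveI : IsCyclic (E.subgroupOf N) := Subgroup.isCyclic_of_le hle
  exact isCyclic_of_surjective _ (Subgroup.subgroupOfEquivOfLe hEN).surjective



lemma aux_card_pow_ker {p : ℕ} {H : Type*} [CommGroup H] [Finite H]
    (hT : Nat.card ((powMonoidHom p : H →* H).ker) ≤ p) (k : ℕ) :
    Nat.card ((powMonoidHom (p ^ k) : H →* H).ker) ≤ p ^ k := by
  induction k with
  | zero =>
    have : (powMonoidHom (p ^ 0) : H →* H).ker = ⊥ := by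
      ext x
      simp [powMonoidHom, MonoidHom.mem_ker]
    rw [this, pow_zero]
    simp [Subgroup.card_bot]
  | succ k ih =>
    set K := (powMonoidHom (p ^ (k + 1)) : H →* H).ker with hK
    set L := (powMonoidHom (p ^ k) : H →* H).ker with hL
    have hmem : ∀ x : H, x ∈ K ↔ x ^ p ^ (k + 1) = 1 := by
      intro x; simp [hK, powMonoidHom, MonoidHom.mem_ker]
    have hmemL : ∀ x : H, x ∈ L ↔ x ^ p ^ k = 1 := by
      intro x; simp [hL, powMonoidHom, MonoidHom.mem_ker]
    have hψmem : ∀ x : ↥K, (x : H) ^ p ∈ L := by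
      intro x
      rw [hmemL, ← pow_mul, ← pow_succ']
      exact (hmem x.1).mp x.2
    let ψ : ↥K →* ↥L :=
      { toFun := fun x => ⟨(x : H) ^ p, hψmem x⟩
        map_one' := by ext; simp
        map_mul' := by intro x y; ext; simp [mul_pow] }
    have hcard : Nat.card ↥K = Nat.card (↥K ⧸ ψ.ker) * Nat.card ψ.ker :=
      Subgroup.card_eq_card_quotient_mul_card_subgroup ψ.ker
    have h1 : Nat.card (↥K ⧸ ψ.ker) = Nat.card ψ.range :=
      Nat.card_congr (QuotientGroup.quotientKerEquivRange ψ).toEquiv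
    have h2 : Nat.card ψ.range ≤ Nat.card ↥L :=
      (Subgroup.card_le_of_le le_top).trans_eq Subgroup.card_top
    have h3 : Nat.card ψ.ker ≤ Nat.card ((powMonoidHom p : H →* H).ker) := by
      refine Nat.card_le_card_of_injective
        (fun x => (⟨x.1.1, by
          have : ((x : ↥K) : H) ^ p = 1 := by
            have hx := x.2
            rw [MonoidHom.mem_ker] at hx
            exact congrArg Subtype.val hx
          simpa [powMonoidHom, MonoidHom.mem_ker] using this⟩ :
          ((powMonoidHom p : H →* H).ker))) ?_
      intro x y hxy
      simp only [Subtype.mk.injEq] at hxy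
      ext
      exact hxy
    calc Nat.card ↥K = Nat.card (↥K ⧸ ψ.ker) * Nat.card ψ.ker := hcard
      _ = Nat.card ψ.range * Nat.card ψ.ker := by rw [h1]
      _ ≤ Nat.card ↥L * p := Nat.mul_le_mul h2 (h3.trans hT)
      _ ≤ p ^ k * p := Nat.mul_le_mul_right p ih
      _ = p ^ (k + 1) := (pow_succ p k).symm




lemma aux_isCyclic_of_torsion {p : ℕ} [hpf : Fact p.Prime] {H : Type*} [CommGroup H] [Finite H]
    (hH : IsPGroup p H) (hcyc : IsCyclic ((powMonoidHom p : H →* H).ker)) : IsCyclic H := by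
  have hp := hpf.out
  -- the p-torsion has at most p elements
  have hT : Nat.card ((powMonoidHom p : H →* H).ker) ≤ p := by
    obtain ⟨g, hg⟩ := hcyc.exists_generator
    have hcard : Nat.card ((powMonoidHom p : H →* H).ker) = orderOf g :=
      (orderOf_eq_card_of_forall_mem_zpowers hg).symm
    have hgp : g ^ p = 1 := by
      ext
      have := g.2
      rw [MonoidHom.mem_ker] at this
      have h' : (g : H) ^ p = 1 := by simpa [powMonoidHom] using this
      exact_mod_cast h'
    rw [hcard]
    exact Nat.le_of_dvd hp.pos (orderOf_dvd_of_pow_eq_one hgp)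
  classical
  cases nonempty_fintype H
  apply isCyclic_of_card_pow_eq_one_le
  intro n hn
  have hsub : {a : H | a ^ n = 1} ⊆
      ((powMonoidHom (p ^ (n.factorization p)) : H →* H).ker : Set H) := by
    intro x hx
    simp only [Set.mem_setOf_eq] at hx
    have h1 : orderOf x ∣ n := orderOf_dvd_of_pow_eq_one hx
    obtain ⟨j, hj⟩ := IsPGroup.iff_orderOf.mp hH x
    have h2 : orderOf x ∣ p ^ (n.factorization p) := by
      rw [hj] at h1 ⊢
      exact pow_dvd_pow p ((Nat.Prime.pow_dvd_iff_le_factorization hp hn.ne').mp h1)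
    have : x ^ (p ^ (n.factorization p)) = 1 := orderOf_dvd_iff_pow_eq_one.mp h2
    simpa [powMonoidHom, MonoidHom.mem_ker] using this
  have hcardle : (Finset.univ.filter (fun a : H => a ^ n = 1)).card ≤
      Nat.card ((powMonoidHom (p ^ (n.factorization p)) : H →* H).ker) := by
    rw [Nat.card_eq_fintype_card]
    rw [← Fintype.card_subtype]
    exact Fintype.card_le_of_injective
      (fun x => ⟨x.1, hsub x.2⟩) (fun x y h => by simp only [Subtype.mk.injEq] at h; exact Subtype.ext h)
  calc (Finset.univ.filter (fun a : H => a ^ n = 1)).card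
      ≤ p ^ (n.factorization p) := hcardle.trans (aux_card_pow_ker hT _)
    _ ≤ n := Nat.ordProj_le p hn.ne'



lemma aux_abelian_normal_cyclic {p : ℕ} [hpf : Fact p.Prime] {G : Type*} [Group G] [Finite G]
    (hG : IsPGroup p G) {N A : Subgroup G} (hND : N ≤ commutator G)
    (hZN : IsCyclic (Subgroup.center ↥N))
    (hA : A.Normal) (hAN : A ≤ N) (hAcomm : ∀ x ∈ A, ∀ y ∈ A, x * y = y * x) :
    IsCyclic ↥A := by
  by_contra hnc
  have hp := hpf.out
  -- the subgroup of p-torsion elements of A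
  let V : Subgroup G :=
    { carrier := {x | x ∈ A ∧ x ^ p = 1}
      one_mem' := ⟨A.one_mem, one_pow p⟩
      mul_mem' := by
        rintro x y ⟨hxA, hxp⟩ ⟨hyA, hyp⟩
        refine ⟨A.mul_mem hxA hyA, ?_⟩
        have hc : Commute x y := hAcomm x hxA y hyA
        rw [hc.mul_pow, hxp, hyp, one_mul]
      inv_mem' := by
        rintro x ⟨hxA, hxp⟩
        exact ⟨A.inv_mem hxA, by rw [inv_pow, hxp, inv_one]⟩ }
  have hVmem : ∀ x : G, x ∈ V ↔ x ∈ A ∧ x ^ p = 1 := fun x => Iff.rfl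
  have hVA : V ≤ A := fun x hx => hx.1
  have hVpow : ∀ x ∈ V, x ^ p = 1 := fun x hx => hx.2
  have hVnormal : V.Normal := by
    constructor
    rintro x ⟨hxA, hxp⟩ g
    refine ⟨hA.conj_mem x hxA g, ?_⟩
    have h1 := map_pow (MulAut.conj g) x p
    simp only [MulAut.conj_apply] at h1
    rw [← h1, hxp]
    simp
  -- A is a commutative group
  letI cA : CommGroup ↥A :=
    { (inferInstance : Group ↥A) with
      mul_comm := fun a b => Subtype.ext (hAcomm a.1 a.2 b.1 b.2) }
  -- V is not cyclic
  have hVnc : ¬ IsCyclic ↥V := by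
    intro hVc
    have hEq : (powMonoidHom p : ↥A →* ↥A).ker = V.subgroupOf A := by
      ext x
      simp only [MonoidHom.mem_ker, powMonoidHom_apply, Subgroup.mem_subgroupOf, hVmem,
        SetLike.coe_mem, true_and]
      rw [← Subgroup.coe_pow, Subtype.ext_iff, OneMemClass.coe_one]
    have hTcyc : IsCyclic ((powMonoidHom p : ↥A →* ↥A).ker) := by
      rw [hEq]
      haveI := hVc
      exact isCyclic_of_surjective _ (Subgroup.subgroupOfEquivOfLe hVA).symm.surjective
    exact hnc (aux_isCyclic_of_torsion (hG.to_subgroup A) hTcyc)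
  have hVbot : V ≠ ⊥ := by
    intro h
    apply hVnc
    rw [h]
    infer_instance
  obtain ⟨w0, hw0V, hw0c, hw0ne⟩ := aux_meets_center hG hVnormal hVbot
  set W : Subgroup G := V ⊓ Subgroup.center G with hWdef
  have hWle : W ≤ V := inf_le_left
  have hWcen : W ≤ Subgroup.center G := inf_le_right
  have hWnormal : W.Normal := by
    constructor
    intro x hx g
    have : g * x * g⁻¹ = x := by
      rw [Subgroup.mem_center_iff.mp hx.2 g]
      group
    rw [this]; exact hx
  by_cases hWc : IsCyclic ↥W
  · -- W is cyclic, generated by w of order p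
    obtain ⟨gw, hgw⟩ := hWc.exists_generator
    set w : G := gw.1 with hwdef
    have hwW : w ∈ W := gw.2
    have hwV : w ∈ V := hWle hwW
    have hwc : w ∈ Subgroup.center G := hWcen hwW
    have hWw : W = Subgroup.zpowers w := by
      apply le_antisymm
      · intro x hx
        obtain ⟨i, hi⟩ := hgw ⟨x, hx⟩
        exact ⟨i, by simpa using congrArg Subtype.val hi⟩
      · exact Subgroup.zpowers_le.mpr hwW
    have hwne : w ≠ 1 := by
      intro h
      apply hw0ne
      have hmem : w0 ∈ W := ⟨hw0V, hw0c⟩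
      rw [hWw, h, Subgroup.zpowers_one_eq_bot, Subgroup.mem_bot] at hmem
      exact hmem
    have hworder : orderOf w = p := orderOf_eq_prime (hVpow w hwV) hwne
    have hcardW : Nat.card ↥W = p := by rw [hWw, Nat.card_zpowers, hworder]
    -- pass to the quotient by W
    haveI := hWnormal
    set π : G →* G ⧸ W := QuotientGroup.mk' W with hπdef
    have hVW : ¬ V ≤ W := by
      intro h
      apply hVnc
      have : W = V := le_antisymm hWle h
      rw [← this]
      exact hWc
    have hmapbot : V.map π ≠ ⊥ := by
      intro h
      apply hVW
      rwa [Subgroup.map_eq_bot_iff, QuotientGroup.ker_mk'] at h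
    haveI hmapnormal : (V.map π).Normal :=
      Subgroup.Normal.map hVnormal π (QuotientGroup.mk'_surjective W)
    obtain ⟨q, hqV, hqc, hqne⟩ :=
      aux_meets_center (hG.to_quotient W) hmapnormal hmapbot
    obtain ⟨x, hxV, hx⟩ := hqV
    have hxW : x ∉ W := by
      intro h
      apply hqne
      rw [← hx]
      exact (QuotientGroup.eq_one_iff x).mpr h
    -- every conjugate of x is x times a central element of W
    have hu : ∀ g : G, ∃ u, u ∈ W ∧ g * x * g⁻¹ = x * u := by
      intro g
      have hπ1 : π (x⁻¹ * (g * x * g⁻¹)) = 1 := by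
        have hcq : π g * q * (π g)⁻¹ = q := by
          rw [Subgroup.mem_center_iff.mp hqc (π g)]
          group
        rw [map_mul, map_inv, map_mul, map_mul, map_inv, hx, hcq]
        group
      have hmem : x⁻¹ * (g * x * g⁻¹) ∈ W := (QuotientGroup.eq_one_iff _).mp hπ1
      exact ⟨x⁻¹ * (g * x * g⁻¹), hmem, by group⟩
    -- the subgroup E generated by w and x
    set E : Subgroup G := Subgroup.closure ({w, x} : Set G) with hEdef
    have hwE : w ∈ E := Subgroup.subset_closure (by simp)
    have hxE : x ∈ E := Subgroup.subset_closure (by simp)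
    have hEV : E ≤ V := by
      rw [hEdef, Subgroup.closure_le]
      rintro y hy
      rcases hy with rfl | rfl
      · exact hwV
      · exact hxV
    have hWE : W ≤ E := hWw ▸ Subgroup.zpowers_le.mpr hwE
    have hEnormal : E.Normal := by
      constructor
      intro e he g
      have hsub : E.map (MulAut.conj g).toMonoidHom ≤ E := by
        rw [hEdef, MonoidHom.map_closure, Subgroup.closure_le]
        rintro y ⟨z, hz, rfl⟩
        simp only [Set.mem_insert_iff, Set.mem_singleton_iff] at hz
        rcases hz with hz | hz
        · have hzz : (MulAut.conj g).toMonoidHom z = w := by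
            simp only [MulEquiv.coe_toMonoidHom, MulAut.conj_apply, hz]
            rw [Subgroup.mem_center_iff.mp hwc g]
            group
          rw [SetLike.mem_coe, hzz]
          exact hwE
        · obtain ⟨u, huW, hgu⟩ := hu g
          have hzz : (MulAut.conj g).toMonoidHom z = x * u := by
            simp only [MulEquiv.coe_toMonoidHom, MulAut.conj_apply, hz]
            exact hgu
          rw [SetLike.mem_coe, hzz]
          exact E.mul_mem hxE (hWE huW)
      exact hsub ⟨e, he, rfl⟩
    -- key: conjugation by g*h and h*g agree on E
    have key : ∀ g h : G, ∀ e ∈ E, (g*h) * e * (g*h)⁻¹ = (h*g) * e * (h*g)⁻¹ := by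
      intro g h e he
      refine Subgroup.closure_induction ?_ ?_ ?_ ?_ he
      · rintro y hy
        simp only [Set.mem_insert_iff, Set.mem_singleton_iff] at hy
        have hcw : ∀ s : G, s * w * s⁻¹ = w := by
          intro s
          rw [Subgroup.mem_center_iff.mp hwc s]
          group
        rcases hy with hy | hy
        · rw [hy, hcw, hcw]
        · rw [hy]
          obtain ⟨ug, hugW, hg⟩ := hu g
          obtain ⟨uh, huhW, hh⟩ := hu h
          have hugcen : ∀ s : G, s * ug * s⁻¹ = ug := by
            intro s
            rw [Subgroup.mem_center_iff.mp (hWcen hugW) s]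
            group
          have hhcen : ∀ s : G, s * uh * s⁻¹ = uh := by
            intro s
            rw [Subgroup.mem_center_iff.mp (hWcen huhW) s]
            group
          have h1 : (g*h) * x * (g*h)⁻¹ = x * (ug * uh) := by
            calc (g*h) * x * (g*h)⁻¹ = g * (h * x * h⁻¹) * g⁻¹ := by group
              _ = g * (x * uh) * g⁻¹ := by rw [hh]
              _ = (g * x * g⁻¹) * (g * uh * g⁻¹) := by group
              _ = (x * ug) * uh := by rw [hg, hhcen]
              _ = x * (ug * uh) := by group
          have h2 : (h*g) * x * (h*g)⁻¹ = x * (uh * ug) := by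
            calc (h*g) * x * (h*g)⁻¹ = h * (g * x * g⁻¹) * h⁻¹ := by group
              _ = h * (x * ug) * h⁻¹ := by rw [hg]
              _ = (h * x * h⁻¹) * (h * ug * h⁻¹) := by group
              _ = (x * uh) * ug := by rw [hh, hugcen]
              _ = x * (uh * ug) := by group
          have h3 : ug * uh = uh * ug :=
            (Subgroup.mem_center_iff.mp (hWcen hugW) uh).symm
          rw [h1, h2, h3]
      · group
      · intro a b _ _ ha hb
        calc (g*h) * (a*b) * (g*h)⁻¹ = ((g*h) * a * (g*h)⁻¹) * ((g*h) * b * (g*h)⁻¹) := by group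
          _ = ((h*g) * a * (h*g)⁻¹) * ((h*g) * b * (h*g)⁻¹) := by rw [ha, hb]
          _ = (h*g) * (a*b) * (h*g)⁻¹ := by group
      · intro a _ ha
        calc (g*h) * a⁻¹ * (g*h)⁻¹ = ((g*h) * a * (g*h)⁻¹)⁻¹ := by group
          _ = ((h*g) * a * (h*g)⁻¹)⁻¹ := by rw [ha]
          _ = (h*g) * a⁻¹ * (h*g)⁻¹ := by group
    -- N centralizes E
    have hcent : N ≤ Subgroup.centralizer (E : Set G) := by
      refine hND.trans ?_
      rw [_root_.commutator_def, Subgroup.commutator_le]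
      intro g hg h hh
      rw [Subgroup.mem_centralizer_iff]
      intro e he
      have he' : (h*g)⁻¹ * e * (h*g) ∈ E := by
        have := hEnormal.conj_mem e he (h*g)⁻¹
        simpa [mul_assoc] using this
      have hk := key g h _ he'
      have hfix : ⁅g, h⁆ * e * ⁅g, h⁆⁻¹ = e := by
        have h2 : (g*h) * ((h*g)⁻¹ * e * (h*g)) * (g*h)⁻¹ = e := by
          rw [hk]; group
        calc ⁅g, h⁆ * e * ⁅g, h⁆⁻¹
            = (g*h) * ((h*g)⁻¹ * e * (h*g)) * (g*h)⁻¹ := by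
              rw [commutatorElement_def]; group
          _ = e := h2
      calc e * ⁅g, h⁆ = (⁅g, h⁆ * e * ⁅g, h⁆⁻¹) * ⁅g, h⁆ := by rw [hfix]
        _ = ⁅g, h⁆ * e := by group
    -- E is cyclic by centrality, contradiction with W < E
    have hEcyc : IsCyclic ↥E :=
      aux_central_cyclic hZN (hEV.trans (hVA.trans hAN))
        (fun e he n hn => (Subgroup.mem_centralizer_iff.mp (hcent hn) e he).symm)
    obtain ⟨gE, hgE⟩ := hEcyc.exists_generator
    have hgEpow : (gE : G) ^ p = 1 := hVpow _ (hEV gE.2)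
    have hcardE : Nat.card ↥E ∣ p := by
      rw [← orderOf_eq_card_of_forall_mem_zpowers hgE]
      apply orderOf_dvd_of_pow_eq_one
      ext
      simpa using hgEpow
    have hWE' : W = E := by
      apply Subgroup.eq_of_le_of_card_ge hWE
      rw [hcardW]
      exact Nat.le_of_dvd hp.pos hcardE
    exact hxW (hWE' ▸ hxE)
  · -- W is not cyclic: contradiction since W is central, so cyclic
    apply hWc
    refine aux_central_cyclic hZN (hWle.trans (hVA.trans hAN)) ?_
    intro e he n _
    exact (Subgroup.mem_center_iff.mp (hWcen he) n)



lemma aux_part_a {p : ℕ} [hpf : Fact p.Prime] {G : Type*} [Group G] [Finite G]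
    (hG : IsPGroup p G) {N : Subgroup G} (hN : N.Normal) (hND : N ≤ commutator G)
    (hZN : IsCyclic (Subgroup.center ↥N)) : IsCyclic ↥N := by
  classical
  set S : Set (Subgroup G) :=
    {A | A ≤ N ∧ A.Normal ∧ ∀ x ∈ A, ∀ y ∈ A, x * y = y * x} with hSdef
  have hbot : (⊥ : Subgroup G) ∈ S := by
    refine ⟨bot_le, inferInstance, ?_⟩
    intro x hx y hy
    rw [Subgroup.mem_bot] at hx hy
    rw [hx, hy]
  obtain ⟨A, hAS, hAmax⟩ := Set.Finite.exists_maximalFor id S (Set.toFinite S) ⟨⊥, hbot⟩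
  obtain ⟨hAN, hAnorm, hAcomm⟩ := hAS
  haveI := hAnorm
  have hAcyc : IsCyclic ↥A := aux_abelian_normal_cyclic hG hND hZN hAnorm hAN hAcomm
  haveI := hAcyc
  have hcen : N ≤ Subgroup.centralizer (A : Set G) :=
    hND.trans (aux_commutator_centralizes hAnorm aux_mulaut_comm)
  have heq : A = N := by
    by_contra hne
    -- pass to the quotient by A
    set π : G →* G ⧸ A := QuotientGroup.mk' A with hπdef
    have hmapbot : N.map π ≠ ⊥ := by
      intro h
      rw [Subgroup.map_eq_bot_iff, QuotientGroup.ker_mk'] at h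
      exact hne (le_antisymm hAN h)
    haveI hmapnormal : (N.map π).Normal :=
      Subgroup.Normal.map hN π (QuotientGroup.mk'_surjective A)
    obtain ⟨y, hyK, hyc, hyne⟩ := aux_meets_center (hG.to_quotient A) hmapnormal hmapbot
    obtain ⟨g, hgN, hgy⟩ := hyK
    have hgA : g ∉ A := by
      intro h
      exact hyne (by rw [← hgy]; exact (QuotientGroup.eq_one_iff g).mpr h)
    -- conjugates of g lie in A * g
    have hconj : ∀ s : G, ∃ a ∈ A, s * g * s⁻¹ = a * g := by
      intro s
      have hπ1 : π ((s * g * s⁻¹) * g⁻¹) = 1 := by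
        have hcq : π s * y * (π s)⁻¹ = y := by
          rw [Subgroup.mem_center_iff.mp hyc (π s)]
          group
        rw [map_mul, map_mul, map_mul, map_inv, map_inv, hgy, hcq]
        group
      have hmem : (s * g * s⁻¹) * g⁻¹ ∈ A := (QuotientGroup.eq_one_iff _).mp hπ1
      exact ⟨(s * g * s⁻¹) * g⁻¹, hmem, by group⟩
    -- the bigger abelian normal subgroup
    set A' : Subgroup G := Subgroup.closure (insert g (A : Set G)) with hA'def
    have hgA' : g ∈ A' := Subgroup.subset_closure (Set.mem_insert g _)
    have hAA' : A ≤ A' := by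
      intro a ha
      exact Subgroup.subset_closure (Set.mem_insert_of_mem g ha)
    have hA'N : A' ≤ N := by
      rw [hA'def, Subgroup.closure_le]
      rintro z hz
      rcases hz with rfl | hz
      · exact hgN
      · exact hAN hz
    have hA'norm : A'.Normal := by
      constructor
      intro e he s
      have hsub : A'.map (MulAut.conj s).toMonoidHom ≤ A' := by
        rw [hA'def, MonoidHom.map_closure, Subgroup.closure_le]
        rintro z' ⟨z, hz, rfl⟩
        rcases hz with rfl | hz
        · obtain ⟨a, haA, hsg⟩ := hconj s
          have hzz : (MulAut.conj s).toMonoidHom z = a * z := by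
            simpa [MulAut.conj_apply] using hsg
          rw [SetLike.mem_coe, hzz]
          exact A'.mul_mem (hAA' haA) hgA'
        · have : (MulAut.conj s).toMonoidHom z ∈ A := hAnorm.conj_mem z hz s
          exact SetLike.mem_coe.mpr (hAA' this)
      exact hsub ⟨e, he, rfl⟩
    have hA'comm : ∀ x ∈ A', ∀ y ∈ A', x * y = y * x := by
      have hgen : ∀ x ∈ insert g (A : Set G), ∀ y ∈ insert g (A : Set G), x * y = y * x := by
        rintro x hx y hy
        rcases hx with rfl | hx <;> rcases hy with rfl | hy
        · rfl
        · exact (Subgroup.mem_centralizer_iff.mp (hcen hgN) y hy).symm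
        · exact (Subgroup.mem_centralizer_iff.mp (hcen hgN) x hx)
        · exact hAcomm x hx y hy
      intro x hx y hy
      rw [hA'def] at hx hy
      exact Subgroup.closure_induction₂
        (fun x y hx hy => hgen x hx y hy)
        (fun x _ => Commute.one_left x)
        (fun x _ => Commute.one_right x)
        (fun x y z _ _ _ h1 h2 => Commute.mul_left h1 h2)
        (fun y z x _ _ _ h1 h2 => Commute.mul_right h1 h2)
        (fun x y _ _ h => Commute.inv_left h)
        (fun x y _ _ h => Commute.inv_right h)
        hx hy
    have : A = A' := le_antisymm hAA' (hAmax ⟨hA'N, hA'norm, hA'comm⟩ hAA')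
    exact hgA (this ▸ hgA')
  rw [← heq]
  exact hAcyc



/-- Suzuki's result and its consequence: if `N` is a normal subgroup of a finite `p`-group `G`
contained in the commutator subgroup `D(G)`, then (a) if the center of `N` is cyclic, `N` is
cyclic; (b) if `|N| = p^3`, then `N` is abelian. -/
theorem stmt_0 {p : ℕ} (hp : p.Prime) {G : Type*} [Group G] [Finite G]
    (hG : IsPGroup p G) (N : Subgroup G) (hN : N.Normal) (hND : N ≤ commutator G) :
    (IsCyclic (Subgroup.center ↥N) → IsCyclic ↥N) ∧
      (Nat.card N = p ^ 3 → ∀ a b : ↥N, a * b = b * a) := by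
  haveI : Fact p.Prime := ⟨hp⟩
  have hcomm_of_cyc : IsCyclic ↥N → ∀ a b : ↥N, a * b = b * a := by
    intro hc a b
    obtain ⟨g, hg⟩ := hc.exists_generator
    obtain ⟨i, rfl⟩ := hg a
    obtain ⟨j, rfl⟩ := hg b
    exact ((Commute.refl g).zpow_zpow i j)
  refine ⟨fun h => aux_part_a hG hN hND h, ?_⟩
  intro hcard
  set Z := Subgroup.center ↥N with hZdef
  haveI : Nontrivial ↥N := by
    rw [← Finite.one_lt_card_iff_nontrivial, hcard]
    exact Nat.one_lt_pow (by norm_num) hp.one_lt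
  haveI hNZ : Nontrivial ↥Z := IsPGroup.center_nontrivial (hG.to_subgroup N)
  have hdvd : Nat.card ↥Z ∣ p ^ 3 := hcard ▸ Subgroup.card_subgroup_dvd_card Z
  obtain ⟨k, hkle, hk⟩ := (Nat.dvd_prime_pow hp).mp hdvd
  have hk1 : 1 ≤ k := by
    by_contra h
    push_neg at h
    interval_cases k
    · rw [pow_zero] at hk
      exact (Finite.one_lt_card_iff_nontrivial.mpr hNZ).ne' hk
  -- card of the quotient of N by its center
  have hmul : Nat.card (↥N ⧸ Z) * p ^ k = p ^ 3 := by
    rw [← hk, ← hcard]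
    exact (Subgroup.card_eq_card_quotient_mul_card_subgroup Z).symm
  have hcyc_quot : IsCyclic (↥N ⧸ Z) → ∀ a b : ↥N, a * b = b * a := by
    intro hq
    haveI := hq
    exact commutative_of_cyclic_center_quotient (QuotientGroup.mk' Z)
      (by rw [QuotientGroup.ker_mk'])
  interval_cases k
  · -- center has order p, hence cyclic; then N is cyclic
    have hZp : Nat.card ↥Z = p := by rw [hk, pow_one]
    rw [hZdef] at hZp
    exact hcomm_of_cyc (aux_part_a hG hN hND (isCyclic_of_prime_card hZp))
  · -- quotient has order p
    apply hcyc_quot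
    have hq : Nat.card (↥N ⧸ Z) = p := by
      have : Nat.card (↥N ⧸ Z) * p ^ 2 = p * p ^ 2 := by
        rw [hmul]; ring
      exact Nat.eq_of_mul_eq_mul_right (pow_pos hp.pos 2) this
    exact isCyclic_of_prime_card hq
  · -- quotient is trivial
    apply hcyc_quot
    have hq : Nat.card (↥N ⧸ Z) = 1 := by
      have : Nat.card (↥N ⧸ Z) * p ^ 3 = 1 * p ^ 3 := by
        rw [hmul]; ring
      exact Nat.eq_of_mul_eq_mul_right (pow_pos hp.pos 3) this
    haveI : Subsingleton (↥N ⧸ Z) := (Nat.card_eq_one_iff_unique.mp hq).1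
    infer_instance
end

section
/- Let p be a prime and G a finite p-group of order p^3 that is normal in some p-group H with G contained in the commutator subgroup D(H). Then G is abelian (isomorphic to one of the abelian groups of order p^3). -/
/-!
If `G` is not abelian, then `Z(G)` has order `p`; being normal of order `p` in the `p`-group `H`,
it is central in `H`. The nontrivial normal subgroup `G / Z(G)` of `H / Z(G)` meets the centre
of `H / Z(G)`, so some `x ∈ G \ Z(G)` has all its commutators with `H` in `Z(G) ≤ Z(H)`, that is
`x ∈ Z₂(H)`. But `Z₂(H)` centralizes `D(H) ≥ G`, so `x ∈ Z(G)` after all.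
-/

open Subgroup (center centralizer mem_center_iff mem_centralizer_iff)
open scoped commutatorElement

section

variable {P : Type*} [Group P]

open scoped IsMulCommutative in
theorem upperCentralSeries_two_le_centralizer_commutator :
    Subgroup.upperCentralSeries P 2 ≤ centralizer (commutator P) := by
  intro x hx
  have hx' : ∀ h : P, ⁅x, h⁆ ∈ center P := by
    simpa only [Subgroup.upperCentralSeries_one] using
      Subgroup.mem_upperCentralSeries_succ_iff.mp hx
  -- `h ↦ ⁅x, h⁆` is a homomorphism into the abelian group `Z(P)`, so it kills `D(P)`.
  let φ : P →* center P := MonoidHom.mk' (fun h ↦ ⟨⁅x, h⁆, hx' h⟩) fun h₁ h₂ ↦ by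
    ext
    show ⁅x, h₁ * h₂⁆ = ⁅x, h₁⁆ * ⁅x, h₂⁆
    calc ⁅x, h₁ * h₂⁆ = ⁅x, h₁⁆ * (h₁ * ⁅x, h₂⁆ * h₁⁻¹) := by
          simp only [commutatorElement_def]; group
      _ = ⁅x, h₁⁆ * ⁅x, h₂⁆ := by
          rw [mem_center_iff.mp (hx' h₂) h₁, mul_inv_cancel_right]
  refine mem_centralizer_iff.mpr fun y hy ↦ ?_
  have hxy : ⁅x, y⁆ = 1 :=
    congrArg Subtype.val (MonoidHom.mem_ker.mp (Abelianization.commutator_subset_ker φ hy))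
  exact (commutatorElement_eq_one_iff_commute.mp hxy).symm

theorem Subgroup.card_inf_centralizer_self (N : Subgroup P) :
    Nat.card ↥(N ⊓ centralizer N) = Nat.card (center N) := by
  have h : (N ⊓ centralizer N).subgroupOf N = center N := by
    ext x
    simp [Subgroup.mem_subgroupOf, mem_centralizer_iff, mem_center_iff, Subtype.ext_iff]
  rw [← Nat.card_congr (Subgroup.subgroupOfEquivOfLe inf_le_left).toEquiv, h]

theorem card_center_eq_prime_of_card_eq_prime_pow_three {p : ℕ} [hp : Fact p.Prime]
    (hP : Nat.card P = p ^ 3) (hnc : ¬ IsMulCommutative P) : Nat.card (center P) = p := by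
  have : Finite P := Nat.finite_of_card_ne_zero (by simp [hP, hp.out.ne_zero])
  obtain ⟨k, hk0, hk⟩ := IsPGroup.card_center_eq_prime_pow hP three_pos
  have hk3 : k ≤ 3 := by
    rw [← Nat.pow_dvd_pow_iff_le_right hp.out.one_lt, ← hk, ← hP]
    exact Subgroup.card_subgroup_dvd_card (center P)
  interval_cases k
  · simpa using hk
  · have hindex : (center P).index = p := by
      have := (center P).card_mul_index
      rw [hk, hP, pow_succ] at this
      exact Nat.eq_of_mul_eq_mul_left (pow_pos hp.out.pos 2) this
    have : IsCyclic (P ⧸ center P) :=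
      isCyclic_of_prime_card (p := p) (by rwa [← Subgroup.index_eq_card])
    exact absurd (isMulCommutative_of_isCyclic_quotient_center_self P) hnc
  · have htop : center P = ⊤ := Subgroup.eq_top_of_card_eq _ (hk.trans hP.symm)
    exact absurd (Subgroup.center_eq_top_iff.mp htop) hnc

end

namespace IsPGroup

variable {p : ℕ} [hp : Fact p.Prime] {P : Type*} [Group P] [Finite P]

theorem inf_center_ne_bot (hP : IsPGroup p P) {N : Subgroup P} [N.Normal] (hN : N ≠ ⊥) :
    N ⊓ center P ≠ ⊥ := by
  obtain ⟨n, hn0, hn⟩ :=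
    (hP.to_subgroup N).nontrivial_iff_card.mp ((Subgroup.nontrivial_iff_ne_bot N).mpr hN)
  -- Conjugation fixes `1 ∈ N`; since `p ∣ |N|` it fixes some other element, which is central.
  have hfix : (1 : N) ∈ MulAction.fixedPoints (ConjAct P) N := fun g ↦ smul_one g
  obtain ⟨b, hb, hb1⟩ := (hP.of_equiv ConjAct.toConjAct)
    |>.exists_fixed_point_of_prime_dvd_card_of_fixed_point N (hn ▸ dvd_pow_self p hn0.ne') hfix
  have hbc : (b : P) ∈ center P := mem_center_iff.mpr fun g ↦ by
    have := congrArg Subtype.val (hb (ConjAct.toConjAct g))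
    rw [ConjAct.Subgroup.val_conj_smul, ConjAct.toConjAct_smul] at this
    exact mul_inv_eq_iff_eq_mul.mp this
  intro h
  have hb' : (b : P) ∈ N ⊓ center P := ⟨b.2, hbc⟩
  rw [h, Subgroup.mem_bot] at hb'
  exact hb1 (Subtype.ext hb'.symm)

theorem le_center_of_card_eq_prime (hP : IsPGroup p P) {N : Subgroup P} [N.Normal]
    (hN : Nat.card N = p) : N ≤ center P := by
  have hNbot : N ≠ ⊥ := by
    rintro rfl
    exact hp.out.one_lt.ne (Subgroup.card_bot.symm.trans hN)
  have hdvd : Nat.card ↥(N ⊓ center P) ∣ p := hN ▸ Subgroup.card_dvd_of_le inf_le_left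
  obtain h | h := (Nat.dvd_prime hp.out).mp hdvd
  · exact absurd ((Subgroup.eq_bot_iff_card _).mpr h) (hP.inf_center_ne_bot hNbot)
  · exact inf_eq_left.mp (Subgroup.eq_of_le_of_card_ge inf_le_left (hN.trans h.symm).le)

theorem exists_commutatorElement_mem_of_not_le (hP : IsPGroup p P) {Z N : Subgroup P}
    [Z.Normal] [N.Normal] (hNZ : ¬ N ≤ Z) :
    ∃ x ∈ N, x ∉ Z ∧ ∀ h : P, ⁅x, h⁆ ∈ Z := by
  have : (N.map (QuotientGroup.mk' Z)).Normal :=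
    ‹N.Normal›.map _ (QuotientGroup.mk'_surjective Z)
  have hbar : N.map (QuotientGroup.mk' Z) ≠ ⊥ := by
    rwa [Ne, Subgroup.map_eq_bot_iff, QuotientGroup.ker_mk']
  obtain h | ⟨_, ⟨hxN, hxc⟩, hx1⟩ :=
    (N.map (QuotientGroup.mk' Z) ⊓ center (P ⧸ Z)).bot_or_exists_ne_one
  · exact absurd h ((hP.to_quotient Z).inf_center_ne_bot hbar)
  obtain ⟨x, hx, rfl⟩ := Subgroup.mem_map.mp hxN
  refine ⟨x, hx, mt (QuotientGroup.eq_one_iff x).mpr hx1, fun h ↦ ?_⟩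
  rw [← QuotientGroup.eq_one_iff, ← QuotientGroup.mk'_apply, map_commutatorElement]
  exact commutatorElement_eq_one_iff_commute.mpr (mem_center_iff.mp hxc _).symm

theorem isMulCommutative_of_le_commutator (hP : IsPGroup p P) {N : Subgroup P} [N.Normal]
    (hNP : N ≤ commutator P) (hZ : N ⊓ centralizer N ≤ center P) : IsMulCommutative N := by
  rw [← Subgroup.le_centralizer_iff_isMulCommutative]
  by_contra hN
  obtain ⟨x, hxN, hxZ, hx⟩ := hP.exists_commutatorElement_mem_of_not_le
    (Z := N ⊓ centralizer N) fun h ↦ hN (le_inf_iff.mp h).2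
  have hx2 : x ∈ Subgroup.upperCentralSeries P 2 :=
    Subgroup.mem_upperCentralSeries_succ_iff.mpr fun y ↦ by
      rw [Subgroup.upperCentralSeries_one]
      exact hZ (hx y)
  exact hxZ ⟨hxN,
    Subgroup.centralizer_le hNP (upperCentralSeries_two_le_centralizer_commutator hx2)⟩

end IsPGroup

/-- A finite `p`-group `G` of order `p^3` which is normal in a `p`-group `H` and contained in
the commutator subgroup `D(H)` is abelian. -/
theorem stmt_1 {p : ℕ} (hp : p.Prime) {H : Type*} [Group H] [Finite H]
    (hH : IsPGroup p H) (G : Subgroup H) (hn : G.Normal) (hd : G ≤ commutator H)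
    (hcard : Nat.card G = p ^ 3) :
    ∀ a b : ↥G, a * b = b * a := by
  have : Fact p.Prime := ⟨hp⟩
  rw [← isMulCommutative_iff]
  by_contra hnc
  have hZ : Nat.card ↥(G ⊓ centralizer G) = p := by
    rw [Subgroup.card_inf_centralizer_self]
    exact card_center_eq_prime_of_card_eq_prime_pow_three hcard hnc
  exact hnc (hH.isMulCommutative_of_le_commutator hd (hH.le_center_of_card_eq_prime hZ))
end

section
/- Let k be an algebraically closed field of characteristic p > 0. Every polynomial f ∈ k[X] has a unique reduced representative red(f) ∈ k[X] modulo ℘(k[X]), where ℘(g) = g^p − g: that is, there is a unique polynomial red(f) lying in the k-span of monomials X^i with gcd(i,p)=1, such that f − red(f) ∈ ℘(k[X]). -/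
open Polynomial

/-! The Artin–Schreier map `℘ g = g ^ p - g` is additive, so the claim says that the reduced
polynomials form an additive complement of `℘(k[X])`.

They span modulo `℘(k[X])`: a constant `a` is `℘` of a constant since `x ^ p - x - a` has a root
in `k`, and for `n = p * m > 0`, writing `a = b ^ p`, `a X ^ n = ℘(b X ^ m) + b X ^ m` lowers the
exponent. They meet `℘(k[X])` trivially: the degree of `℘ g` is `p * deg g` (or `0`), a multiple
of `p`, whereas a nonzero reduced polynomial has degree prime to `p`. -/

theorem AddSubgroup.existsUnique_mem_sub_mem_of_isCompl {M : Type*} [AddCommGroup M]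
    {A B : AddSubgroup M} (h : IsCompl A B) (x : M) : ∃! a, a ∈ A ∧ x - a ∈ B := by
  obtain ⟨a, ha, b, hb, rfl⟩ := AddSubgroup.mem_sup.1 (h.sup_eq_top ▸ AddSubgroup.mem_top x)
  refine ⟨a, ⟨ha, by rwa [add_sub_cancel_left]⟩, fun a' ⟨ha', hb'⟩ => ?_⟩
  have hdiff : a' - a ∈ B := by
    convert B.sub_mem hb hb' using 1
    abel
  exact sub_eq_zero.1 (AddSubgroup.disjoint_def.1 h.disjoint (A.sub_mem ha' ha) hdiff)

theorem IsAlgClosed.exists_pow_sub_self_eq {k : Type*} [Field k] [IsAlgClosed k] {n : ℕ}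
    (hn : 1 < n) (a : k) : ∃ b : k, b ^ n - b = a := by
  have hdeg : degree ((X : k[X]) ^ n - X) = n := by
    rw [degree_sub_eq_left_of_degree_lt] <;> rw [degree_X_pow]
    rw [degree_X]; exact_mod_cast hn
  have hn0 : (0 : WithBot ℕ) < n := by exact_mod_cast zero_lt_one.trans hn
  obtain ⟨b, hb⟩ := IsAlgClosed.exists_root (X ^ n - X - C a)
    (by rw [degree_sub_C (hdeg ▸ hn0), hdeg]; exact hn0.ne')
  exact ⟨b, sub_eq_zero.1 (by simpa using hb)⟩

def artinSchreier (R : Type*) [CommRing R] (p : ℕ) [ExpChar R p] : R →+ R :=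
  (frobenius R p : R →+ R) - AddMonoidHom.id R

@[simp]
theorem artinSchreier_apply {R : Type*} [CommRing R] {p : ℕ} [ExpChar R p] (x : R) :
    artinSchreier R p x = x ^ p - x := rfl

namespace Polynomial

def reduced (R : Type*) [Ring R] (p : ℕ) : AddSubgroup R[X] where
  carrier := {r | ∀ i, ¬ i.Coprime p → r.coeff i = 0}
  zero_mem' _ _ := coeff_zero _
  add_mem' ha hb i hi := by simp [ha i hi, hb i hi]
  neg_mem' ha i hi := by simp [ha i hi]

section Ring

variable {R : Type*} [Ring R] {p : ℕ}

theorem mem_reduced_iff {r : R[X]} : r ∈ reduced R p ↔ ∀ i, r.coeff i ≠ 0 → Nat.gcd i p = 1 :=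
  forall_congr' fun _ => not_imp_comm

theorem monomial_mem_reduced {n : ℕ} (hn : n.Coprime p) (a : R) : monomial n a ∈ reduced R p :=
  fun i hi => coeff_monomial_of_ne a (by rintro rfl; exact hi hn)

theorem eq_zero_of_mem_reduced_of_dvd_natDegree (hp : p ≠ 1) {r : R[X]} (hr : r ∈ reduced R p)
    (hdvd : p ∣ r.natDegree) : r = 0 := by
  by_contra hne
  have hcop : r.natDegree.Coprime p := by_contra fun h => leadingCoeff_ne_zero.2 hne (hr _ h)
  exact hp (Nat.Coprime.eq_one_of_dvd hcop.symm hdvd)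

end Ring

theorem dvd_natDegree_pow_sub_self {R : Type*} [CommRing R] [NoZeroDivisors R] {n : ℕ}
    (hn : 1 < n) (g : R[X]) : n ∣ (g ^ n - g).natDegree := by
  rcases g.natDegree.eq_zero_or_pos with hg | hg
  · rw [eq_C_of_natDegree_eq_zero hg, ← C_pow, ← C_sub, natDegree_C]
    exact dvd_zero n
  · have hlt : g.natDegree < (g ^ n).natDegree := by
      rw [natDegree_pow]; exact lt_mul_left hg hn
    rw [natDegree_sub_eq_left_of_natDegree_lt hlt, natDegree_pow]
    exact dvd_mul_right n _

theorem disjoint_reduced_range_artinSchreier (R : Type*) [CommRing R] [NoZeroDivisors R]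
    (p : ℕ) [Fact p.Prime] [CharP R p] : Disjoint (reduced R p) (artinSchreier R[X] p).range := by
  have hp : p.Prime := Fact.out
  refine AddSubgroup.disjoint_def.2 fun hr ⟨g, hg⟩ => ?_
  subst hg
  exact eq_zero_of_mem_reduced_of_dvd_natDegree hp.ne_one hr
    (dvd_natDegree_pow_sub_self hp.one_lt g)

section IsAlgClosed

variable (k : Type*) [Field k] [IsAlgClosed k] (p : ℕ) [Fact p.Prime] [CharP k p]

theorem monomial_mem_reduced_sup_range_artinSchreier (n : ℕ) (a : k) :
    monomial n a ∈ reduced k p ⊔ (artinSchreier k[X] p).range := by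
  have hp : p.Prime := Fact.out
  induction n using Nat.strong_induction_on generalizing a with
  | _ n ih =>
  by_cases hdvd : p ∣ n
  swap
  · exact AddSubgroup.mem_sup_left
      (monomial_mem_reduced (Nat.coprime_comm.1 (hp.coprime_iff_not_dvd.2 hdvd)) a)
  obtain ⟨m, rfl⟩ := hdvd
  rcases m.eq_zero_or_pos with rfl | hm
  · obtain ⟨b, hb⟩ := IsAlgClosed.exists_pow_sub_self_eq hp.one_lt a
    refine AddSubgroup.mem_sup_right ⟨C b, ?_⟩
    rw [artinSchreier_apply, mul_zero, monomial_zero_left, ← C_pow, ← C_sub, hb]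
  · obtain ⟨b, rfl⟩ := IsAlgClosed.exists_pow_nat_eq a hp.pos
    have hsplit : monomial (p * m) (b ^ p) =
        artinSchreier k[X] p (monomial m b) + monomial m b := by
      rw [artinSchreier_apply, monomial_pow, mul_comm, sub_add_cancel]
    rw [hsplit]
    exact add_mem (AddSubgroup.mem_sup_right ⟨_, rfl⟩)
      (ih m (lt_mul_left hm hp.one_lt) b)

theorem reduced_sup_range_artinSchreier :
    reduced k p ⊔ (artinSchreier k[X] p).range = ⊤ := by
  refine eq_top_iff.2 fun f _ => ?_
  rw [f.as_sum_support]
  exact sum_mem fun n _ => monomial_mem_reduced_sup_range_artinSchreier k p n _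

theorem isCompl_reduced_range_artinSchreier :
    IsCompl (reduced k p) (artinSchreier k[X] p).range :=
  ⟨disjoint_reduced_range_artinSchreier k p,
    codisjoint_iff.2 (reduced_sup_range_artinSchreier k p)⟩

end IsAlgClosed

end Polynomial

/-- Over an algebraically closed field `k` of characteristic `p > 0`, every polynomial
`f ∈ k[X]` has a unique reduced representative modulo `℘(k[X])`, `℘(g) = g^p - g`:
a unique polynomial all of whose monomials `X^i` have exponent prime to `p`, congruent
to `f` mod `℘(k[X])`. -/
theorem stmt_3 {k : Type*} [Field k] [IsAlgClosed k] {p : ℕ} [Fact p.Prime] [CharP k p]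
    (f : Polynomial k) :
    ∃! r : Polynomial k,
      (∀ i : ℕ, r.coeff i ≠ 0 → Nat.gcd i p = 1) ∧
        ∃ g : Polynomial k, f - r = g ^ p - g := by
  refine existsUnique_congr (fun r => ?_) |>.1
    (AddSubgroup.existsUnique_mem_sub_mem_of_isCompl (isCompl_reduced_range_artinSchreier k p) f)
  simp only [mem_reduced_iff, AddMonoidHom.mem_range, artinSchreier_apply, eq_comm]
end

section
/- Let G be a finite group acting faithfully on a smooth projective curve C of genus g over an algebraically closed field of characteristic p > 0, such that the cover C → C/G ≅ P^1 is ramified only at one point ∞ with G = G_0 = G_1 the wild inertia there. Then for a subgroup H ≤ G, the quotient curve C/H has genus 0 if and only if H contains the second ramification group G_2 of G at ∞. (Equivalently: 2|H| g_{C/H} = Σ_{i≥2} (|G_i| − |H ∩ G_i|), which vanishes iff G_2 ⊆ H.) -/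
open Finset

/-- For a totally wildly ramified `p`-group cover `C → C/G ≅ ℙ¹` ramified at a single point,
with lower ramification groups `Gi` (so `G₀ = G₁ = G` and `Gi i = ⊥` for `i ≥ n`), and a
subgroup `H ≤ G`, the genera `g` of `C` and `gH` of `C/H` given by the Hurwitz genus formula
satisfy `2|H|·gH = Σ_{i≥2} (|G_i| - |H ∩ G_i|)`, and `gH = 0` if and only if `G₂ ⊆ H`. -/
theorem stmt_4 {G : Type*} [Group G] [Finite G]
    (Gi : ℕ → Subgroup G) (n : ℕ)
    (h0 : Gi 0 = ⊤) (h1 : Gi 1 = ⊤)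
    (hdec : ∀ i j : ℕ, i ≤ j → Gi j ≤ Gi i)
    (hn : ∀ i : ℕ, n ≤ i → Gi i = ⊥)
    (H : Subgroup G) (g gH : ℤ)
    (hgH0 : 0 ≤ gH)
    (hHurwitzG : 2 * (g - 1) = 2 * (Nat.card G : ℤ) * (0 - 1)
      + ∑ i ∈ Finset.range n, ((Nat.card (Gi i) : ℤ) - 1))
    (hHurwitzH : 2 * (g - 1) = 2 * (Nat.card H : ℤ) * (gH - 1)
      + ∑ i ∈ Finset.range n, ((Nat.card (H ⊓ Gi i : Subgroup G) : ℤ) - 1)) :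
    2 * (Nat.card H : ℤ) * gH
        = ∑ i ∈ Finset.Ico 2 n, ((Nat.card (Gi i) : ℤ) - (Nat.card (H ⊓ Gi i : Subgroup G) : ℤ))
      ∧ (gH = 0 ↔ Gi 2 ≤ H) := by
  have hHpos : 0 < Nat.card H := Nat.card_pos
  have hterm : ∀ i, (0:ℤ) ≤ (Nat.card (Gi i) : ℤ) - (Nat.card (H ⊓ Gi i : Subgroup G) : ℤ) := by
    intro i
    have := Subgroup.card_le_of_le (inf_le_right : H ⊓ Gi i ≤ Gi i)
    exact sub_nonneg.mpr (by exact_mod_cast this)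
  by_cases hn2 : 2 ≤ n
  · have hsub : ∑ i ∈ Finset.range n, ((Nat.card (Gi i) : ℤ) - (Nat.card (H ⊓ Gi i : Subgroup G) : ℤ))
        = 2 * (Nat.card H : ℤ) * (gH - 1) + 2 * (Nat.card G : ℤ) := by
      have hd : ∑ i ∈ Finset.range n, ((Nat.card (Gi i) : ℤ) - (Nat.card (H ⊓ Gi i : Subgroup G) : ℤ))
          = (∑ i ∈ Finset.range n, ((Nat.card (Gi i) : ℤ) - 1))
            - (∑ i ∈ Finset.range n, ((Nat.card (H ⊓ Gi i : Subgroup G) : ℤ) - 1)) := by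
        rw [← Finset.sum_sub_distrib]
        exact Finset.sum_congr rfl fun i _ => by ring
      rw [hd]; linarith [hHurwitzG, hHurwitzH]
    have hsplit : ∑ i ∈ Finset.range n, ((Nat.card (Gi i) : ℤ) - (Nat.card (H ⊓ Gi i : Subgroup G) : ℤ))
        = ((Nat.card (Gi 0) : ℤ) - (Nat.card (H ⊓ Gi 0 : Subgroup G) : ℤ))
          + ((Nat.card (Gi 1) : ℤ) - (Nat.card (H ⊓ Gi 1 : Subgroup G) : ℤ))
          + ∑ i ∈ Finset.Ico 2 n, ((Nat.card (Gi i) : ℤ) - (Nat.card (H ⊓ Gi i : Subgroup G) : ℤ)) := by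
      rw [Finset.range_eq_Ico, ← Finset.sum_Ico_consecutive _ (Nat.zero_le 2) hn2,
        ← Finset.range_eq_Ico]
      congr 1
      rw [Finset.sum_range_succ, Finset.sum_range_one]
    have e0 : (Nat.card (Gi 0) : ℤ) = Nat.card G := by rw [h0, Subgroup.card_top]
    have e1 : (Nat.card (Gi 1) : ℤ) = Nat.card G := by rw [h1, Subgroup.card_top]
    have f0 : (Nat.card (H ⊓ Gi 0 : Subgroup G) : ℤ) = Nat.card H := by rw [h0, inf_top_eq]
    have f1 : (Nat.card (H ⊓ Gi 1 : Subgroup G) : ℤ) = Nat.card H := by rw [h1, inf_top_eq]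
    rw [hsub, e0, e1, f0, f1] at hsplit
    have hmain : 2 * (Nat.card H : ℤ) * gH
        = ∑ i ∈ Finset.Ico 2 n, ((Nat.card (Gi i) : ℤ) - (Nat.card (H ⊓ Gi i : Subgroup G) : ℤ)) := by
      linarith
    refine ⟨hmain, ?_, ?_⟩
    · intro hgH
      rw [hgH, mul_zero] at hmain
      have hzero := (Finset.sum_eq_zero_iff_of_nonneg (fun i _ => hterm i)).mp hmain.symm
      by_cases h2n : 2 < n
      · have h2 := hzero 2 (Finset.mem_Ico.mpr ⟨le_refl 2, h2n⟩)
        have hc : (Nat.card (Gi 2) : ℤ) = Nat.card (H ⊓ Gi 2 : Subgroup G) := by linarith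
        have hcard : Nat.card (Gi 2) ≤ Nat.card (H ⊓ Gi 2 : Subgroup G) := by exact_mod_cast hc.le
        have heq : H ⊓ Gi 2 = Gi 2 := Subgroup.eq_of_le_of_card_ge inf_le_right hcard
        rw [← heq]; exact inf_le_left
      · rw [hn 2 (by omega)]; exact bot_le
    · intro hle
      have hz : ∀ i ∈ Finset.Ico 2 n,
          ((Nat.card (Gi i) : ℤ) - (Nat.card (H ⊓ Gi i : Subgroup G) : ℤ)) = 0 := by
        intro i hi
        have hi2 : Gi i ≤ H := le_trans (hdec 2 i (Finset.mem_Ico.mp hi).1) hle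
        rw [inf_of_le_right hi2, sub_self]
      rw [Finset.sum_eq_zero hz] at hmain
      have hpos : (0:ℤ) < 2 * (Nat.card H : ℤ) := by positivity
      exact (mul_eq_zero.mp hmain).resolve_left hpos.ne'
  · have htriv : (⊤ : Subgroup G) = ⊥ := by rw [← h1, hn 1 (by omega)]
    have hG1 : Nat.card G = 1 := by
      have := Subgroup.card_bot (G := G)
      rw [← htriv, Subgroup.card_top] at this
      exact this
    have hHbot : H = ⊥ := le_antisymm (htriv ▸ le_top) bot_le
    have hH1 : Nat.card H = 1 := by rw [hHbot, Subgroup.card_bot]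
    have hsumG : ∑ i ∈ Finset.range n, ((Nat.card (Gi i) : ℤ) - 1) = 0 := by
      apply Finset.sum_eq_zero
      intro i _
      have : Gi i = ⊥ := le_antisymm (htriv ▸ le_top) bot_le
      rw [this, Subgroup.card_bot]; norm_num
    have hsumH : ∑ i ∈ Finset.range n, ((Nat.card (H ⊓ Gi i : Subgroup G) : ℤ) - 1) = 0 := by
      apply Finset.sum_eq_zero
      intro i _
      have : H ⊓ Gi i = ⊥ := le_antisymm (htriv ▸ le_top) bot_le
      rw [this, Subgroup.card_bot]; norm_num
    rw [hsumG, hG1] at hHurwitzG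
    rw [hsumH, hH1] at hHurwitzH
    have hgH : gH = 0 := by push_cast at hHurwitzG hHurwitzH; linarith
    have hico : Finset.Ico 2 n = ∅ := Finset.Ico_eq_empty (by omega)
    refine ⟨by rw [hico, Finset.sum_empty, hgH, mul_zero], fun _ => ?_, fun _ => hgH⟩
    rw [hn 2 (by omega)]
    exact bot_le
end

section
/- Let p be a prime, s ≥ 2, and let f_0(X) = X^{1+p^s} + P_2(X) ∈ k[X] with deg P_2 ≤ 1 + p^{s−1}, and P(X) = y^{1/p} X^{p^{s−1}} + P_1(X) with deg P_1 ≤ p^{s−2}, over an algebraically closed field k of characteristic p. Then δ := Σ_{i=1}^{p−1} ((−1)^i / i)·( f_0(X)^i P(X)^{p(p−i)} − f_0(X+y)^i P(X)^{p−i} ) equals Σ_{i=1}^{p−1} ((−1)^i / i)·y^{p−i}·X^{i+p^{s+1}} plus terms of degree < p^{s+1}+1 in X. -/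
open Polynomial

set_option maxHeartbeats 1000000

lemma aux_pow_sub {k : Type*} [Field k] (c : k) (e d : ℕ) (F : Polynomial k)
    (hF : F.natDegree ≤ d) (hde : d ≤ e) :
    ∀ j, 1 ≤ j → ((C c * X ^ e + F) ^ j - C (c ^ j) * X ^ (j * e)).natDegree
      ≤ (j - 1) * e + d := by
  intro j hj
  induction j, hj using Nat.le_induction with
  | base => simpa using hF
  | succ n hn ih =>
    have key : (C c * X ^ e + F) ^ (n + 1) - C (c ^ (n + 1)) * X ^ ((n + 1) * e)
        = (C c * X ^ e + F) * ((C c * X ^ e + F) ^ n - C (c ^ n) * X ^ (n * e))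
          + F * (C (c ^ n) * X ^ (n * e)) := by
      rw [add_one_mul, pow_add, pow_succ, pow_succ, C_mul]
      ring
    rw [key, Nat.add_sub_cancel]
    refine (natDegree_add_le _ _).trans (max_le ?_ ?_)
    · refine natDegree_mul_le.trans ?_
      have h1 : (C c * X ^ e + F).natDegree ≤ e :=
        (natDegree_add_le _ _).trans
          (max_le ((natDegree_C_mul_le _ _).trans (natDegree_X_pow e).le) (hF.trans hde))
      refine (Nat.add_le_add h1 ih).trans ?_
      obtain ⟨m, hm⟩ : ∃ m, n = m + 1 := ⟨n - 1, by omega⟩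
      subst hm
      simp only [Nat.add_sub_cancel, add_one_mul]
      omega
    · refine natDegree_mul_le.trans ?_
      have h2 : (C (c ^ n) * X ^ (n * e)).natDegree ≤ n * e :=
        (natDegree_C_mul_le _ _).trans (natDegree_X_pow _).le
      omega

/-- Lemma 5.2: with `f₀(X) = X^{1+pˢ} + P₂(X)` (`deg P₂ ≤ 1 + p^{s-1}`) and
`P(X) = y^{1/p}·X^{p^{s-1}} + P₁(X)` (`deg P₁ ≤ p^{s-2}`), the polynomial
`δ = Σ_{i=1}^{p-1} ((-1)^i/i)·(f₀(X)^i·P(X)^{p(p-i)} - f₀(X+y)^i·P(X)^{p-i})`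
equals `Σ_{i=1}^{p-1} ((-1)^i/i)·y^{p-i}·X^{i+p^{s+1}}` plus terms of degree
`< p^{s+1} + 1`. -/
theorem stmt_12 {p : ℕ} (hp : p.Prime) {k : Type*} [Field k] [IsAlgClosed k] [CharP k p]
    {s : ℕ} (hs : 2 ≤ s) (y yr : k) (hyr : yr ^ p = y)
    (P₁ P₂ : Polynomial k)
    (hP₂ : P₂.natDegree ≤ 1 + p ^ (s - 1)) (hP₁ : P₁.natDegree ≤ p ^ (s - 2)) :
    ((∑ i ∈ Finset.Icc 1 (p - 1), C ((-1 : k) ^ i / (i : k)) *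
        (((X ^ (1 + p ^ s) + P₂) ^ i) * (C yr * X ^ (p ^ (s - 1)) + P₁) ^ (p * (p - i))
          - (((X ^ (1 + p ^ s) + P₂).comp (X + C y)) ^ i)
              * (C yr * X ^ (p ^ (s - 1)) + P₁) ^ (p - i)))
      - ∑ i ∈ Finset.Icc 1 (p - 1),
          C ((-1 : k) ^ i / (i : k) * y ^ (p - i)) * X ^ (i + p ^ (s + 1))).degree
      < ((p ^ (s + 1) + 1 : ℕ) : WithBot ℕ) := by
  haveI := Fact.mk hp
  have hp2 : 2 ≤ p := hp.two_le
  have hp1 : 1 ≤ p := by omega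
  have hs1 : s - 1 + 1 = s := by omega
  have hs2 : s - 2 + 1 = s - 1 := by omega
  have hmulQ : p ^ (s - 1) * p = p ^ s := by rw [← pow_succ, hs1]
  have hmulQ' : p * p ^ (s - 2) = p ^ (s - 1) := by rw [← pow_succ', hs2]
  have hPs : p ^ s = p * p ^ (s - 1) := by rw [← pow_succ', hs1]
  have hPs1 : p ^ (s + 1) = p * p ^ s := by rw [← pow_succ']
  have hQp : p ≤ p ^ (s - 1) := by
    calc p = p ^ 1 := (pow_one p).symm
    _ ≤ p ^ (s - 1) := Nat.pow_le_pow_right hp1 (by omega)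
  have hQle : p ^ (s - 1) ≤ p ^ s := Nat.pow_le_pow_right hp1 (by omega)
  have hPp : (C yr * X ^ (p ^ (s - 1)) + P₁) ^ p = C y * X ^ (p ^ s) + P₁ ^ p := by
    rw [add_pow_char, mul_pow, ← C_pow, hyr, ← pow_mul, hmulQ]
  have hP1p : (P₁ ^ p).natDegree ≤ p ^ (s - 1) := by
    refine natDegree_pow_le.trans ?_
    calc p * P₁.natDegree ≤ p * p ^ (s - 2) := Nat.mul_le_mul_left _ hP₁
    _ = p ^ (s - 1) := hmulQ'
  have hf0 : (X ^ (1 + p ^ s) + P₂ : Polynomial k).natDegree ≤ 1 + p ^ s :=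
    (natDegree_add_le _ _).trans (max_le (natDegree_X_pow _).le (hP₂.trans (by omega)))
  have hcomp : ((X ^ (1 + p ^ s) + P₂).comp (X + C y)).natDegree ≤ 1 + p ^ s := by
    rw [natDegree_comp, natDegree_X_add_C, mul_one]; exact hf0
  have hPdeg : (C yr * X ^ (p ^ (s - 1)) + P₁).natDegree ≤ p ^ (s - 1) :=
    (natDegree_add_le _ _).trans
      (max_le ((natDegree_C_mul_le _ _).trans (natDegree_X_pow _).le) (hP₁.trans (by
        calc p ^ (s - 2) ≤ p * p ^ (s - 2) := Nat.le_mul_of_pos_left _ (by omega)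
        _ = p ^ (s - 1) := hmulQ')))
  rw [← Finset.sum_sub_distrib]
  refine lt_of_le_of_lt (degree_sum_le _ _) ?_
  rw [Finset.sup_lt_iff (WithBot.bot_lt_coe _)]
  intro i hi
  rw [Finset.mem_Icc] at hi
  obtain ⟨hi1, hi2⟩ := hi
  obtain ⟨a, ha⟩ : ∃ a, i = a + 1 := ⟨i - 1, by omega⟩
  obtain ⟨b, hb⟩ : ∃ b, p = i + 1 + b := ⟨p - i - 1, by omega⟩
  have hsubi1 : i - 1 = a := by omega
  have hsubpi : p - i = b + 1 := by omega
  have hsubpi1 : p - i - 1 = b := by omega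
  refine lt_of_le_of_lt (degree_le_natDegree) ?_
  rw [Nat.cast_lt, Nat.lt_succ_iff]
  set c : k := (-1 : k) ^ i / (i : k) with hc
  set E : Polynomial k := X ^ (i * (1 + p ^ s)) with hE
  set Fp : Polynomial k := C (y ^ (p - i)) * X ^ ((p - i) * p ^ s) with hFp
  set R : Polynomial k := (X ^ (1 + p ^ s) + P₂) ^ i - E with hR
  set S : Polynomial k := (C y * X ^ (p ^ s) + P₁ ^ p) ^ (p - i) - Fp with hS
  set B : Polynomial k :=
    ((X ^ (1 + p ^ s) + P₂).comp (X + C y)) ^ i * (C yr * X ^ (p ^ (s - 1)) + P₁) ^ (p - i)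
    with hB
  -- degree bounds on the pieces
  have hRdeg : R.natDegree ≤ (i - 1) * (1 + p ^ s) + (1 + p ^ (s - 1)) := by
    have := aux_pow_sub (1 : k) (1 + p ^ s) (1 + p ^ (s - 1)) P₂ hP₂ (by omega) i hi1
    simpa [hR, hE] using this
  have hSdeg : S.natDegree ≤ (p - i - 1) * p ^ s + p ^ (s - 1) := by
    have := aux_pow_sub y (p ^ s) (p ^ (s - 1)) (P₁ ^ p) hP1p hQle (p - i) (by omega)
    simpa [hS, hFp, mul_comm (p - i) (p ^ s)] using this
  have hEdeg : E.natDegree = i * (1 + p ^ s) := natDegree_X_pow _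
  have hFpdeg : Fp.natDegree ≤ (p - i) * p ^ s :=
    (natDegree_C_mul_le _ _).trans (natDegree_X_pow _).le
  have hBdeg : B.natDegree ≤ i * (1 + p ^ s) + (p - i) * p ^ (s - 1) := by
    refine natDegree_mul_le.trans (Nat.add_le_add ?_ ?_)
    · exact natDegree_pow_le.trans (Nat.mul_le_mul_left _ hcomp)
    · exact natDegree_pow_le.trans (Nat.mul_le_mul_left _ hPdeg)
  -- numeric inequalities
  have hub : i + 1 + p ^ (s - 1) ≤ p ^ s := by
    have h1 : 2 * p ^ (s - 1) ≤ p ^ s := by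
      rw [hPs]; exact Nat.mul_le_mul_right _ hp2
    omega
  have ineq1 : i * (1 + p ^ s) + ((p - i - 1) * p ^ s + p ^ (s - 1)) ≤ p ^ (s + 1) := by
    rw [hsubpi1, hPs1]
    have e1 : i * (1 + p ^ s) + (b * p ^ s + p ^ (s - 1))
        = (i + p ^ (s - 1)) + (i * p ^ s + b * p ^ s) := by ring
    have hsplit : p * p ^ s = (i * p ^ s + b * p ^ s) + p ^ s := by
      nth_rewrite 1 [hb]; ring
    omega
  have ineq2 : ((i - 1) * (1 + p ^ s) + (1 + p ^ (s - 1))) + (p - i) * p ^ s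
      ≤ p ^ (s + 1) := by
    rw [hsubi1, hsubpi, hPs1]
    have e2 : (a * (1 + p ^ s) + (1 + p ^ (s - 1))) + (b + 1) * p ^ s
        = (a + 1 + p ^ (s - 1)) + (a * p ^ s + b * p ^ s + p ^ s) := by ring
    have hsplit : p * p ^ s = a * p ^ s + b * p ^ s + p ^ s + p ^ s := by
      nth_rewrite 1 [hb]; rw [ha]; ring
    omega
  have ineq3 : ((i - 1) * (1 + p ^ s) + (1 + p ^ (s - 1)))
      + ((p - i - 1) * p ^ s + p ^ (s - 1)) ≤ p ^ (s + 1) := by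
    rw [hsubi1, hsubpi1, hPs1]
    have e3 : (a * (1 + p ^ s) + (1 + p ^ (s - 1))) + (b * p ^ s + p ^ (s - 1))
        = (a + 1 + 2 * p ^ (s - 1)) + (a * p ^ s + b * p ^ s) := by ring
    have hsplit : p * p ^ s = a * p ^ s + b * p ^ s + 2 * p ^ s := by
      nth_rewrite 1 [hb]; rw [ha]; ring
    omega
  have ineq4 : i * (1 + p ^ s) + (p - i) * p ^ (s - 1) ≤ p ^ (s + 1) := by
    rw [hsubpi, hPs1]
    have e4 : i * (1 + p ^ s) + (b + 1) * p ^ (s - 1)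
        = i + (b + 1) * p ^ (s - 1) + i * p ^ s := by ring
    have hsplit : p * p ^ s = i * p ^ s + (b + 1) * p ^ s := by
      nth_rewrite 1 [hb]; ring
    have h5 : (b + 1) * (p ^ (s - 1) + i + 1) ≤ (b + 1) * p ^ s :=
      Nat.mul_le_mul_left _ (by omega)
    have h6 : (b + 1) * (p ^ (s - 1) + i + 1)
        = (b + 1) * p ^ (s - 1) + (b + 1) * i + (b + 1) := by ring
    have h7 : i ≤ (b + 1) * i := Nat.le_mul_of_pos_left _ (by omega)
    omega
  -- rewrite the term
  have hA : (X ^ (1 + p ^ s) + P₂) ^ i = E + R := by rw [hR]; ring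
  have hPow : (C yr * X ^ (p ^ (s - 1)) + P₁) ^ (p * (p - i)) = Fp + S := by
    rw [pow_mul, hPp, hS]; ring
  have hexp : i * (1 + p ^ s) + (p - i) * p ^ s = i + p ^ (s + 1) := by
    have h1 : i * p ^ s + (p - i) * p ^ s = p * p ^ s := by
      rw [← add_mul]; congr 1; omega
    calc i * (1 + p ^ s) + (p - i) * p ^ s
        = i + (i * p ^ s + (p - i) * p ^ s) := by ring
      _ = i + p * p ^ s := by rw [h1]
      _ = i + p ^ (s + 1) := by rw [← hPs1]
  have hEF : C (c * y ^ (p - i)) * X ^ (i + p ^ (s + 1)) = C c * (E * Fp) := by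
    rw [← hexp, C_mul, pow_add, hE, hFp]; ring
  have hkey : C c * ((X ^ (1 + p ^ s) + P₂) ^ i
        * (C yr * X ^ (p ^ (s - 1)) + P₁) ^ (p * (p - i)) - B)
      - C (c * y ^ (p - i)) * X ^ (i + p ^ (s + 1))
      = C c * (E * S + R * Fp + R * S - B) := by
    rw [hA, hPow, hEF]; ring
  rw [hkey]
  refine (natDegree_C_mul_le _ _).trans ?_
  refine (natDegree_sub_le _ _).trans (max_le ?_ (hBdeg.trans ineq4))
  refine (natDegree_add_le _ _).trans (max_le ((natDegree_add_le _ _).trans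
    (max_le ?_ ?_)) ?_)
  · exact natDegree_mul_le.trans ((Nat.add_le_add hEdeg.le hSdeg).trans ineq1)
  · exact natDegree_mul_le.trans ((Nat.add_le_add hRdeg hFpdeg).trans ineq2)
  · exact natDegree_mul_le.trans ((Nat.add_le_add hRdeg hSdeg).trans ineq3)
end

section
/- Let q = p^{2s}, r = p^s, a ∈ F_q with a^r + a = 0 and a ≠ 0, and f_0(X) = aX^{1+r} ∈ F_q[X]. For every y ∈ F_q, f_0(X+y) − f_0(X) − f_0(y) = ℘(P_y(X)) where P_y(X) = (I + F + ... + F^{s−1})(−a y^r X) and ℘(g) = g^p − g. In particular f_0(X+y) ≡ f_0(X) + f_0(y) mod ℘(F_q[X]) for all y ∈ F_q. -/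
open Polynomial

/-- For `q = p^{2s}`, `r = pˢ`, `a ∈ F_q` with `a^r + a = 0`, `a ≠ 0`, and
`f₀(X) = a·X^{1+r}`, for every `y ∈ F_q` one has
`f₀(X+y) - f₀(X) - f₀(y) = ℘(P_y(X))` with
`P_y(X) = (I + F + ⋯ + F^{s-1})(-a·y^r·X)`, where `℘(g) = g^p - g`.
In particular `f₀(X+y) ≡ f₀(X) + f₀(y) mod ℘(F_q[X])`. -/
theorem stmt_17 {p s : ℕ} (hp : p.Prime) (hs : 1 ≤ s)
    {K : Type*} [Field K] [CharP K p]
    (a : K) (ha : a ^ (p ^ s) + a = 0) (ha0 : a ≠ 0)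
    (y : K) (hy : y ^ (p ^ (2 * s)) = y) :
    (C a * X ^ (1 + p ^ s)).comp (X + C y) - C a * X ^ (1 + p ^ s) - C (a * y ^ (1 + p ^ s))
        = (∑ i ∈ Finset.range s, (C (-(a * y ^ (p ^ s))) * X) ^ (p ^ i)) ^ p
            - ∑ i ∈ Finset.range s, (C (-(a * y ^ (p ^ s))) * X) ^ (p ^ i) ∧
    ∃ g : Polynomial K,
      (C a * X ^ (1 + p ^ s)).comp (X + C y)
        = C a * X ^ (1 + p ^ s) + C (a * y ^ (1 + p ^ s)) + (g ^ p - g) := by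
  have hfact := Fact.mk hp
  set b : K := -(a * y ^ (p ^ s)) with hb
  set f : ℕ → Polynomial K := fun i => (C b * X) ^ (p ^ i) with hf
  have har : a ^ (p ^ s) = -a := by linear_combination ha
  have hyy : (y ^ (p ^ s)) ^ (p ^ s) = y := by
    rw [← pow_mul, ← pow_add, ← two_mul, hy]
  have hneg : ∀ c : K, (-c) ^ (p ^ s) = -(c ^ (p ^ s)) := by
    intro c
    rw [← zero_sub, sub_pow_char_pow, zero_pow (pow_ne_zero _ hp.ne_zero), zero_sub]
  have hbps : b ^ (p ^ s) = a * y := by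
    rw [hb, hneg, mul_pow, har, hyy]; ring
  -- LHS computation
  have hL : (C a * X ^ (1 + p ^ s)).comp (X + C y) - C a * X ^ (1 + p ^ s)
      - C (a * y ^ (1 + p ^ s))
      = C (a * y) * X ^ (p ^ s) + C (a * y ^ (p ^ s)) * X := by
    have h1 : (X + C y : Polynomial K) ^ (p ^ s) = X ^ (p ^ s) + C (y ^ (p ^ s)) := by
      rw [add_pow_char_pow, map_pow]
    simp only [comp, eval₂_mul, eval₂_C, eval₂_X_pow, eval₂_add, eval₂_X, pow_add, pow_one, h1,
      map_mul, map_pow]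
    ring
  -- RHS telescoping
  have hR : (∑ i ∈ Finset.range s, f i) ^ p - ∑ i ∈ Finset.range s, f i
      = f s - f 0 := by
    have hpow : (∑ i ∈ Finset.range s, f i) ^ p = ∑ i ∈ Finset.range s, f (i + 1) := by
      rw [sum_pow_char]
      refine Finset.sum_congr rfl fun i _ => ?_
      rw [hf, ← pow_mul, ← pow_succ]
    rw [hpow]
    have h2 := Finset.sum_range_succ' f s
    have h3 := Finset.sum_range_succ f s
    have : ∑ i ∈ Finset.range s, f (i + 1) = ∑ i ∈ Finset.range s, f i + f s - f 0 := by
      rw [← h3, h2]; ring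
    rw [this]; ring
  have hf0 : f 0 = C b * X := by simp [hf]
  have hfs : f s = C (a * y) * X ^ (p ^ s) := by
    show (C b * X) ^ p ^ s = C (a * y) * X ^ p ^ s
    rw [mul_pow, ← map_pow, hbps]
  have key : (C a * X ^ (1 + p ^ s)).comp (X + C y) - C a * X ^ (1 + p ^ s)
      - C (a * y ^ (1 + p ^ s))
      = (∑ i ∈ Finset.range s, f i) ^ p - ∑ i ∈ Finset.range s, f i := by
    rw [hL, hR, hf0, hfs, hb, map_neg]; ring
  exact ⟨key, ∑ i ∈ Finset.range s, f i, by linear_combination key⟩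
end
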